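/- Let k be a kernel on a compact metric space S admitting an absolutely and uniformly convergent expansion k(x,y) = ∑_m b_m a_m ∑_{j=1}^{N_m} Y_{mj}(x)Y_{mj}(y) with b_m > 0, a_m > 0, where the linear span of {Y_{mj}} is dense in C(S). If ν₁, ν₂ are Borel probability measures on S with ∬ k d(ν₁−ν₂)d(ν₁−ν₂) = 0, then ν₁ = ν₂. -/

import Mathlib

open MeasureTheory

private lemma cont_integrable {S : Type*} [MetricSpace S] [CompactSpace S] [MeasurableSpace S]
    [BorelSpace S] (μ : Measure S) [IsFiniteMeasure μ] {f : S → ℝ} (hf : Continuous f) :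
    Integrable f μ :=
  hf.integrable_of_hasCompactSupport (HasCompactSupport.of_compactSpace f)

private lemma aux_double_integral
    {S : Type*} [MetricSpace S] [CompactSpace S] [MeasurableSpace S] [BorelSpace S]
    (b a : ℕ → ℝ)
    (N : ℕ → ℕ) (Y : (m : ℕ) → Fin (N m) → C(S, ℝ))
    (c : ℕ → ℝ) (hcsum : Summable c)
    (hdom : ∀ m x y, |b m * a m * ∑ j, Y m j x * Y m j y| ≤ c m)
    (k : S → S → ℝ)
    (hk : ∀ x y, k x y = ∑' m : ℕ, b m * a m * ∑ j, Y m j x * Y m j y)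
    (μ μ' : Measure S) [IsProbabilityMeasure μ] [IsProbabilityMeasure μ'] :
    ∫ x, ∫ y, k x y ∂μ' ∂μ
      = ∑' m, b m * a m * ∑ j, (∫ x, Y m j x ∂μ) * (∫ y, Y m j y ∂μ') := by
  have hYc : ∀ m (j : Fin (N m)), Continuous fun x => Y m j x := fun m j => (Y m j).continuous
  have hFc : ∀ m x, Continuous fun y => b m * a m * ∑ j, Y m j x * Y m j y := fun m x =>
    continuous_const.mul (continuous_finset_sum _ fun j _ => continuous_const.mul (hYc m j))
  have hGc : ∀ m, Continuous fun x => b m * a m * ∑ j, Y m j x * ∫ y, Y m j y ∂μ' := fun m =>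
    continuous_const.mul (continuous_finset_sum _ fun j _ => (hYc m j).mul continuous_const)
  -- inner integral
  have hinner : ∀ x, ∫ y, k x y ∂μ'
      = ∑' m, b m * a m * ∑ j, Y m j x * ∫ y, Y m j y ∂μ' := by
    intro x
    have h1 : ∫ y, k x y ∂μ' = ∫ y, ∑' m, b m * a m * ∑ j, Y m j x * Y m j y ∂μ' := by
      simp_rw [hk]
    rw [h1, ← integral_tsum_of_summable_integral_norm]
    · refine tsum_congr fun m => ?_
      rw [integral_const_mul, integral_finset_sum]
      · simp_rw [integral_const_mul]
      · exact fun j _ => (cont_integrable μ' (continuous_const.mul (hYc m j)))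
    · exact fun m => cont_integrable μ' (hFc m x)
    · refine Summable.of_nonneg_of_le (fun m => integral_nonneg fun y => norm_nonneg _)
        (fun m => ?_) hcsum
      calc ∫ y, ‖b m * a m * ∑ j, Y m j x * Y m j y‖ ∂μ'
          ≤ ∫ _, c m ∂μ' := by
            refine integral_mono ?_ (integrable_const _) fun y => hdom m x y
            exact (cont_integrable μ' (hFc m x)).norm
        _ = c m := by simp
  simp_rw [hinner]
  rw [← integral_tsum_of_summable_integral_norm]
  · refine tsum_congr fun m => ?_
    rw [integral_const_mul, integral_finset_sum]
    · congr 1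
      refine Finset.sum_congr rfl fun j _ => ?_
      rw [integral_mul_const]
    · exact fun j _ => (cont_integrable μ (hYc m j)).mul_const _
  · exact fun m => cont_integrable μ (hGc m)
  · refine Summable.of_nonneg_of_le (fun m => integral_nonneg fun y => norm_nonneg _)
      (fun m => ?_) hcsum
    have hb : ∀ x, ‖b m * a m * ∑ j, Y m j x * ∫ y, Y m j y ∂μ'‖ ≤ c m := by
      intro x
      have : b m * a m * ∑ j, Y m j x * ∫ y, Y m j y ∂μ'
          = ∫ y, b m * a m * ∑ j, Y m j x * Y m j y ∂μ' := by
        rw [integral_const_mul, integral_finset_sum]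
        · simp_rw [integral_const_mul]
        · exact fun j _ => (cont_integrable μ' (continuous_const.mul (hYc m j)))
      rw [this]
      calc ‖∫ y, b m * a m * ∑ j, Y m j x * Y m j y ∂μ'‖
          ≤ c m * (μ' Set.univ).toReal := by
            refine norm_integral_le_of_norm_le_const (Filter.Eventually.of_forall fun y => ?_)
            exact hdom m x y
        _ = c m := by simp
    calc ∫ x, ‖b m * a m * ∑ j, Y m j x * ∫ y, Y m j y ∂μ'‖ ∂μ
        ≤ ∫ _, c m ∂μ := by
          refine integral_mono ?_ (integrable_const _) hb
          exact (cont_integrable μ (hGc m)).norm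
      _ = c m := by simp

private lemma aux_term_bound
    {S : Type*} [MetricSpace S] [CompactSpace S] [MeasurableSpace S] [BorelSpace S]
    (b a : ℕ → ℝ)
    (N : ℕ → ℕ) (Y : (m : ℕ) → Fin (N m) → C(S, ℝ))
    (c : ℕ → ℝ)
    (hdom : ∀ m x y, |b m * a m * ∑ j, Y m j x * Y m j y| ≤ c m)
    (μ μ' : Measure S) [IsProbabilityMeasure μ] [IsProbabilityMeasure μ'] (m : ℕ) :
    |b m * a m * ∑ j, (∫ x, Y m j x ∂μ) * (∫ y, Y m j y ∂μ')| ≤ c m := by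
  have hYc : ∀ m (j : Fin (N m)), Continuous fun x => Y m j x := fun m j => (Y m j).continuous
  have hrw : ∀ x, b m * a m * ∑ j, Y m j x * ∫ y, Y m j y ∂μ'
      = ∫ y, b m * a m * ∑ j, Y m j x * Y m j y ∂μ' := by
    intro x
    rw [integral_const_mul, integral_finset_sum]
    · simp_rw [integral_const_mul]
    · exact fun j _ => (cont_integrable μ' (continuous_const.mul (hYc m j)))
  have hG : ∀ x, ‖b m * a m * ∑ j, Y m j x * ∫ y, Y m j y ∂μ'‖ ≤ c m := by
    intro x
    rw [hrw]
    calc ‖∫ y, b m * a m * ∑ j, Y m j x * Y m j y ∂μ'‖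
        ≤ c m * (μ' Set.univ).toReal :=
          norm_integral_le_of_norm_le_const (Filter.Eventually.of_forall fun y => hdom m x y)
      _ = c m := by simp
  have hrw2 : b m * a m * ∑ j, (∫ x, Y m j x ∂μ) * (∫ y, Y m j y ∂μ')
      = ∫ x, b m * a m * ∑ j, Y m j x * ∫ y, Y m j y ∂μ' ∂μ := by
    rw [integral_const_mul, integral_finset_sum]
    · congr 1
      refine Finset.sum_congr rfl fun j _ => ?_
      rw [integral_mul_const]
    · exact fun j _ => (cont_integrable μ (hYc m j)).mul_const _
  rw [hrw2, ← Real.norm_eq_abs]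
  calc ‖∫ x, b m * a m * ∑ j, Y m j x * ∫ y, Y m j y ∂μ' ∂μ‖
      ≤ c m * (μ Set.univ).toReal :=
        norm_integral_le_of_norm_le_const (Filter.Eventually.of_forall hG)
    _ = c m := by simp

/-- characteristicness from a dense harmonic expansion: let `S` be a
compact metric space and `k(x,y) = ∑_m b_m a_m ∑_j Y_{mj}(x) Y_{mj}(y)` an
absolutely and uniformly convergent expansion with strictly positive coefficients
`b_m, a_m > 0`, where the `Y_{mj}` are continuous and their linear span is dense in
`C(S)`.  If two Borel probability measures `ν₁, ν₂` satisfy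
`∬ k d(ν₁−ν₂) d(ν₁−ν₂) = 0`, then `ν₁ = ν₂`. -/
theorem dense_harmonic_expansion_characteristic
    {S : Type*} [MetricSpace S] [CompactSpace S] [MeasurableSpace S] [BorelSpace S]
    (b a : ℕ → ℝ) (hb : ∀ m, 0 < b m) (ha : ∀ m, 0 < a m)
    (N : ℕ → ℕ) (Y : (m : ℕ) → Fin (N m) → C(S, ℝ))
    (c : ℕ → ℝ) (hcsum : Summable c)
    (hdom : ∀ m x y, |b m * a m * ∑ j, Y m j x * Y m j y| ≤ c m)
    (k : S → S → ℝ)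
    (hk : ∀ x y, k x y = ∑' m : ℕ, b m * a m * ∑ j, Y m j x * Y m j y)
    (hdense : Dense
      ((Submodule.span ℝ {f : C(S, ℝ) | ∃ m j, f = Y m j} : Submodule ℝ C(S, ℝ)) : Set C(S, ℝ)))
    (ν₁ ν₂ : Measure S) [IsProbabilityMeasure ν₁] [IsProbabilityMeasure ν₂]
    (hzero : (∫ x, ∫ y, k x y ∂ν₁ ∂ν₁) - (∫ x, ∫ y, k x y ∂ν₂ ∂ν₁)
        - (∫ x, ∫ y, k x y ∂ν₁ ∂ν₂) + ∫ x, ∫ y, k x y ∂ν₂ ∂ν₂ = 0) :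
    ν₁ = ν₂ := by
  have hsm : ∀ (μ μ' : Measure S) [IsProbabilityMeasure μ] [IsProbabilityMeasure μ'],
      Summable (fun m => b m * a m * ∑ j, (∫ x, Y m j x ∂μ) * (∫ y, Y m j y ∂μ')) := by
    intro μ μ' _ _
    refine Summable.of_norm_bounded hcsum fun m => ?_
    rw [Real.norm_eq_abs]
    exact aux_term_bound b a N Y c hdom μ μ' m
  rw [aux_double_integral b a N Y c hcsum hdom k hk ν₁ ν₁,
      aux_double_integral b a N Y c hcsum hdom k hk ν₁ ν₂,
      aux_double_integral b a N Y c hcsum hdom k hk ν₂ ν₁,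
      aux_double_integral b a N Y c hcsum hdom k hk ν₂ ν₂,
      ← Summable.tsum_sub (hsm ν₁ ν₁) (hsm ν₁ ν₂),
      ← Summable.tsum_sub ((hsm ν₁ ν₁).sub (hsm ν₁ ν₂)) (hsm ν₂ ν₁),
      ← Summable.tsum_add (((hsm ν₁ ν₁).sub (hsm ν₁ ν₂)).sub (hsm ν₂ ν₁)) (hsm ν₂ ν₂)] at hzero
  set d : (m : ℕ) → Fin (N m) → ℝ :=
    fun m j => (∫ x, Y m j x ∂ν₁) - (∫ x, Y m j x ∂ν₂) with hd
  have hcomb : ∀ m,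
      b m * a m * ∑ j, (∫ x, Y m j x ∂ν₁) * (∫ y, Y m j y ∂ν₁)
        - b m * a m * ∑ j, (∫ x, Y m j x ∂ν₁) * (∫ y, Y m j y ∂ν₂)
        - b m * a m * ∑ j, (∫ x, Y m j x ∂ν₂) * (∫ y, Y m j y ∂ν₁)
        + b m * a m * ∑ j, (∫ x, Y m j x ∂ν₂) * (∫ y, Y m j y ∂ν₂)
      = b m * a m * ∑ j, d m j ^ 2 := by
    intro m
    simp only [← mul_sub, ← mul_add, ← Finset.sum_sub_distrib, ← Finset.sum_add_distrib]
    congr 1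
    refine Finset.sum_congr rfl fun j _ => ?_
    simp only [hd]
    ring
  have hzero' : ∑' m, b m * a m * ∑ j, d m j ^ 2 = 0 := by
    rw [← hzero]
    exact tsum_congr fun m => (hcomb m).symm
  have hts : Summable fun m => b m * a m * ∑ j, d m j ^ 2 := by
    have := (((hsm ν₁ ν₁).sub (hsm ν₁ ν₂)).sub (hsm ν₂ ν₁)).add (hsm ν₂ ν₂)
    simpa only [hcomb] using this
  have hnn : ∀ m, 0 ≤ b m * a m * ∑ j, d m j ^ 2 := fun m =>
    mul_nonneg (mul_nonneg (hb m).le (ha m).le) (Finset.sum_nonneg fun j _ => sq_nonneg _)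
  have hIeq : ∀ m (j : Fin (N m)), ∫ x, Y m j x ∂ν₁ = ∫ x, Y m j x ∂ν₂ := by
    intro m j
    have ht0 : b m * a m * ∑ j, d m j ^ 2 = 0 := by
      have hle := Summable.le_tsum hts m fun m' _ => hnn m'
      have hge : ∀ m', b m' * a m' * ∑ j, d m' j ^ 2 ≤ ∑' m', b m' * a m' * ∑ j, d m' j ^ 2 :=
        fun m' => Summable.le_tsum hts m' fun m'' _ => hnn m''
      have := hge m
      rw [hzero'] at this
      exact le_antisymm this (hnn m)
    have hsum0 : ∑ j, d m j ^ 2 = 0 := by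
      have hba : b m * a m ≠ 0 := (mul_pos (hb m) (ha m)).ne'
      exact (mul_eq_zero.mp ht0).resolve_left hba
    have := (Finset.sum_eq_zero_iff_of_nonneg fun j _ => sq_nonneg (d m j)).mp hsum0 j
      (Finset.mem_univ j)
    have hdj : d m j = 0 := by
      have := pow_eq_zero_iff (n := 2) (by norm_num) |>.mp this
      exact this
    exact sub_eq_zero.mp hdj
  -- all continuous functions integrate equally
  have hcontInt : ∀ (ν : Measure S) [IsProbabilityMeasure ν],
      Continuous fun f : C(S, ℝ) => ∫ x, f x ∂ν := by
    intro ν _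
    refine (LipschitzWith.of_dist_le_mul (K := 1) fun f g => ?_).continuous
    rw [NNReal.coe_one, one_mul, Real.dist_eq]
    have hsub : ∫ x, f x ∂ν - ∫ x, g x ∂ν = ∫ x, (f x - g x) ∂ν :=
      (integral_sub (cont_integrable ν f.continuous) (cont_integrable ν g.continuous)).symm
    rw [hsub, ← Real.norm_eq_abs]
    calc ‖∫ x, (f x - g x) ∂ν‖
        ≤ dist f g * (ν Set.univ).toReal := by
          refine norm_integral_le_of_norm_le_const (Filter.Eventually.of_forall fun x => ?_)
          rw [Real.norm_eq_abs, ← Real.dist_eq]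
          exact ContinuousMap.dist_apply_le_dist x
      _ = dist f g := by simp
  have hall : ∀ f : C(S, ℝ), ∫ x, f x ∂ν₁ = ∫ x, f x ∂ν₂ := by
    set A : Set C(S, ℝ) := {f | ∫ x, f x ∂ν₁ = ∫ x, f x ∂ν₂} with hA
    have hclosed : IsClosed A := isClosed_eq (hcontInt ν₁) (hcontInt ν₂)
    have hspan : ((Submodule.span ℝ {f : C(S, ℝ) | ∃ m j, f = Y m j} :
        Submodule ℝ C(S, ℝ)) : Set C(S, ℝ)) ⊆ A := by
      intro f hf
      refine Submodule.span_induction ?_ ?_ ?_ ?_ hf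
      · rintro g ⟨m, j, rfl⟩
        exact hIeq m j
      · simp [hA]
      · intro g h _ _ hg hh
        simp only [hA, Set.mem_setOf_eq, ContinuousMap.coe_add, Pi.add_apply] at *
        rw [integral_add (cont_integrable ν₁ g.continuous) (cont_integrable ν₁ h.continuous),
          integral_add (cont_integrable ν₂ g.continuous) (cont_integrable ν₂ h.continuous),
          hg, hh]
      · intro r g _ hg
        simp only [hA, Set.mem_setOf_eq, ContinuousMap.coe_smul, Pi.smul_apply,
          smul_eq_mul] at *
        rw [integral_const_mul, integral_const_mul, hg]
    intro f
    have hfA : f ∈ A := hclosed.closure_subset_iff.mpr hspan (hdense f)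
    exact hfA
  refine ext_of_forall_lintegral_eq_of_IsFiniteMeasure fun f => ?_
  have h1 : (∫⁻ x, f x ∂ν₁) ≠ ⊤ := (BoundedContinuousFunction.lintegral_lt_top_of_nnreal ν₁ f).ne
  have h2 : (∫⁻ x, f x ∂ν₂) ≠ ⊤ := (BoundedContinuousFunction.lintegral_lt_top_of_nnreal ν₂ f).ne
  rw [← ENNReal.toReal_eq_toReal_iff' h1 h2,
    BoundedContinuousFunction.toReal_lintegral_coe_eq_integral,
    BoundedContinuousFunction.toReal_lintegral_coe_eq_integral]
  exact hall ⟨fun x => (f x : ℝ), NNReal.continuous_coe.comp f.continuous⟩
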